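/- If P^{n*} = 0 in the iterative decomposition procedure, then P = Σ_{l=1}^{n*} α_l L^l with Σ_{l=1}^{n*} α_l = 1, α_l ∈ (0,1], and each L^l a deterministic 0-1 matrix with exactly one 1 per row. -/

import Mathlib

/-- The maximum of row `i` of the matrix `P`. -/
noncomputable def rowMax {I J : Type*} [Fintype J] [Nonempty J]
    (P : I → J → ℝ) (i : I) : ℝ :=
  Finset.univ.sup' Finset.univ_nonempty (P i)

open Classical in
/-- The first column index achieving the maximum of row `i` of `P`. -/
noncomputable def argmaxRow {I J : Type*} [Fintype J] [Nonempty J] [LinearOrder J]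
    (P : I → J → ℝ) (i : I) : J :=
  (Finset.univ.filter fun j => P i j = rowMax P i).min' (by
    obtain ⟨b, _, hb⟩ := Finset.exists_mem_eq_sup' (Finset.univ_nonempty) (P i)
    exact ⟨b, Finset.mem_filter.mpr ⟨Finset.mem_univ b, hb.symm⟩⟩)

/-- The greedy coefficient `α = min_i max_j P i j`. -/
noncomputable def alphaCoef {I J : Type*} [Fintype I] [Nonempty I] [Fintype J] [Nonempty J]
    (P : I → J → ℝ) : ℝ :=
  Finset.univ.inf' Finset.univ_nonempty (rowMax P)

/-- The 0-1 matrix with a `1` in row `i` exactly at the first column achieving the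
row maximum of `P`. -/
noncomputable def Lmat {I J : Type*} [Fintype J] [Nonempty J] [LinearOrder J]
    (P : I → J → ℝ) : I → J → ℝ :=
  fun i j => if j = argmaxRow P i then 1 else 0

/-- The iterative greedy decomposition procedure:
`P⁰ = P`, `P^{m+1} = P^m - α(P^m) • L(P^m)`. -/
noncomputable def iterP {I J : Type*} [Fintype I] [Nonempty I]
    [Fintype J] [Nonempty J] [LinearOrder J]
    (P : I → J → ℝ) : ℕ → I → J → ℝ
  | 0 => P
  | m + 1 => fun i j => iterP P m i j - alphaCoef (iterP P m) * Lmat (iterP P m) i j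

/-!
Every step subtracts `α • L` where `L` picks one maximal entry per row and `α` is at most every
row maximum, so the entries stay nonnegative, while every row sum drops by exactly `α`. Hence all
row sums of `P^m` equal `1 - ∑_{l<m} α_l`: at termination this forces `∑ α_l = 1`, and before
termination it forces every row of `P^l` to have positive sum, hence a positive maximum, so
`α_l > 0`.
-/

section RowMax

variable {I J : Type*} [Fintype J] [Nonempty J]

lemma le_rowMax (Q : I → J → ℝ) (i : I) (j : J) : Q i j ≤ rowMax Q i :=
  Finset.le_sup' _ (Finset.mem_univ j)

lemma alphaCoef_le_rowMax [Fintype I] [Nonempty I] (Q : I → J → ℝ) (i : I) :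
    alphaCoef Q ≤ rowMax Q i :=
  Finset.inf'_le _ (Finset.mem_univ i)

lemma alphaCoef_pos_of_sum_row_pos [Fintype I] [Nonempty I] {Q : I → J → ℝ}
    (hsum : ∀ i, 0 < ∑ j, Q i j) : 0 < alphaCoef Q := by
  refine (Finset.lt_inf'_iff _).2 fun i _ => ?_
  by_contra! hmax
  have : ∑ j, Q i j ≤ 0 := Finset.sum_nonpos fun j _ => (le_rowMax Q i j).trans hmax
  exact (hsum i).not_ge this

variable [LinearOrder J]

open Classical in
lemma apply_argmaxRow (Q : I → J → ℝ) (i : I) : Q i (argmaxRow Q i) = rowMax Q i := by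
  unfold argmaxRow
  exact (Finset.mem_filter.mp
    (Finset.min'_mem (Finset.univ.filter fun j => Q i j = rowMax Q i) _)).2

lemma Lmat_eq_zero_or_one (Q : I → J → ℝ) (i : I) (j : J) :
    Lmat Q i j = 0 ∨ Lmat Q i j = 1 := by
  unfold Lmat
  split_ifs <;> simp

lemma sum_Lmat (Q : I → J → ℝ) (i : I) : ∑ j, Lmat Q i j = 1 := by
  simp [Lmat]

lemma sub_alphaCoef_mul_Lmat_nonneg [Fintype I] [Nonempty I] {Q : I → J → ℝ}
    (hQ : ∀ i j, 0 ≤ Q i j) (i : I) (j : J) : 0 ≤ Q i j - alphaCoef Q * Lmat Q i j := by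
  by_cases hj : j = argmaxRow Q i
  · simpa [Lmat, hj, apply_argmaxRow] using alphaCoef_le_rowMax Q i
  · simpa [Lmat, hj] using hQ i j

end RowMax

section Iteration

variable {I J : Type*} [Fintype I] [Nonempty I] [Fintype J] [Nonempty J] [LinearOrder J]

lemma iterP_eq_sub_sum (P : I → J → ℝ) (m : ℕ) (i : I) (j : J) :
    iterP P m i j =
      P i j - ∑ l ∈ Finset.range m, alphaCoef (iterP P l) * Lmat (iterP P l) i j := by
  induction m with
  | zero => simp [iterP]
  | succ m ih => simp only [iterP, Finset.sum_range_succ, ih]; ring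

lemma sum_iterP (P : I → J → ℝ) (m : ℕ) (i : I) :
    ∑ j, iterP P m i j = ∑ j, P i j - ∑ l ∈ Finset.range m, alphaCoef (iterP P l) := by
  simp only [iterP_eq_sub_sum, Finset.sum_sub_distrib, Finset.sum_comm (γ := J),
    ← Finset.mul_sum, sum_Lmat, mul_one]

lemma iterP_nonneg {P : I → J → ℝ} (hP : ∀ i j, 0 ≤ P i j) (m : ℕ) (i : I) (j : J) :
    0 ≤ iterP P m i j := by
  induction m generalizing i j with
  | zero => exact hP i j
  | succ m ih => exact sub_alphaCoef_mul_Lmat_nonneg ih i j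

lemma sum_iterP_pos {P : I → J → ℝ} {c : ℝ} (hP : ∀ i j, 0 ≤ P i j)
    (hrow : ∀ i, ∑ j, P i j = c) {m : ℕ} (hm : ¬ ∀ i j, iterP P m i j = 0) (i : I) :
    0 < ∑ j, iterP P m i j := by
  refine (Finset.sum_nonneg fun j _ => iterP_nonneg hP m i j).lt_of_ne fun hi => hm fun i' j => ?_
  have hi' : ∑ j, iterP P m i' j = 0 := by rw [sum_iterP, hrow, ← hrow i, ← sum_iterP, ← hi]
  exact (Finset.sum_eq_zero_iff_of_nonneg fun j _ => iterP_nonneg hP m i' j).1 hi' j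
    (Finset.mem_univ j)

end Iteration

theorem iterP_terminates_gives_decomposition_general
    {I J : Type*} [Fintype I] [Nonempty I] [Fintype J] [Nonempty J] [LinearOrder J]
    (P : I → J → ℝ)
    (h0 : ∀ i j, 0 ≤ P i j)
    (hrow : ∀ i, ∑ j, P i j = 1)
    (n : ℕ)
    (hzero : ∀ i j, iterP P n i j = 0)
    (hne : ∀ l < n, ¬ (∀ i j, iterP P l i j = 0)) :
    (∀ i j, P i j =
        ∑ l ∈ Finset.range n, alphaCoef (iterP P l) * Lmat (iterP P l) i j) ∧
    (∑ l ∈ Finset.range n, alphaCoef (iterP P l) = 1) ∧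
    (∀ l ∈ Finset.range n,
        0 < alphaCoef (iterP P l) ∧ alphaCoef (iterP P l) ≤ 1) ∧
    (∀ l ∈ Finset.range n,
        (∀ i j, Lmat (iterP P l) i j = 0 ∨ Lmat (iterP P l) i j = 1) ∧
        (∀ i, ∑ j, Lmat (iterP P l) i j = 1)) := by
  obtain ⟨i₀⟩ := ‹Nonempty I›
  have hsum : ∑ l ∈ Finset.range n, alphaCoef (iterP P l) = 1 := by
    have h := sum_iterP P n i₀
    simp only [hzero, Finset.sum_const_zero, hrow] at h
    linarith
  have hpos : ∀ l ∈ Finset.range n, 0 < alphaCoef (iterP P l) := fun l hl =>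
    alphaCoef_pos_of_sum_row_pos (sum_iterP_pos h0 hrow (hne l (Finset.mem_range.1 hl)))
  refine ⟨fun i j => ?_, hsum, fun l hl => ⟨hpos l hl, ?_⟩,
    fun l _ => ⟨Lmat_eq_zero_or_one _, sum_Lmat _⟩⟩
  · linarith [iterP_eq_sub_sum P n i j, hzero i j]
  · exact hsum ▸ Finset.single_le_sum (fun k hk => (hpos k hk).le) hl

/-- If the iterative decomposition procedure terminates at step `n*`
(i.e. `P^{n*} = 0` and `P^l ≠ 0` for `l < n*`), then
`P = ∑_{l=1}^{n*} α_l • L^l` with `∑ α_l = 1`, each `α_l ∈ (0,1]`, and each `L^l`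
a deterministic 0-1 matrix with exactly one `1` per row. -/
theorem iterP_terminates_gives_decomposition
    {I J : Type*} [Fintype I] [Nonempty I] [Fintype J] [Nonempty J] [LinearOrder J]
    (P : I → J → ℝ)
    (h0 : ∀ i j, 0 ≤ P i j) (h1 : ∀ i j, P i j ≤ 1)
    (hrow : ∀ i, ∑ j, P i j = 1)
    (n : ℕ)
    (hzero : ∀ i j, iterP P n i j = 0)
    (hne : ∀ l < n, ¬ (∀ i j, iterP P l i j = 0)) :
    (∀ i j, P i j =
        ∑ l ∈ Finset.range n, alphaCoef (iterP P l) * Lmat (iterP P l) i j) ∧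
    (∑ l ∈ Finset.range n, alphaCoef (iterP P l) = 1) ∧
    (∀ l ∈ Finset.range n,
        0 < alphaCoef (iterP P l) ∧ alphaCoef (iterP P l) ≤ 1) ∧
    (∀ l ∈ Finset.range n,
        (∀ i j, Lmat (iterP P l) i j = 0 ∨ Lmat (iterP P l) i j = 1) ∧
        (∀ i, ∑ j, Lmat (iterP P l) i j = 1)) :=
  iterP_terminates_gives_decomposition_general P h0 hrow n hzero hne
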